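/- Let θ > 0, let T ≥ 1 and L ≥ 1 be natural numbers, and let δ ∈ ℝ. Consider the product probability measure μ ⊗ γ on ℝ × ℝ, where μ is the uniform probability measure on [0, θ] and γ is the standard Gaussian measure on ℝ (mean 0, variance 1). Then the expected conversion error between the SNN's ideal average postsynaptic potential at T time steps and the Noisy Quantized (NQ) activation at quantization step L is zero: ∫ (θ·clip((1/T)·⌊z·T/θ + 1/2⌋, 0, 1) - θ·clip((1/L)·⌊z·L/θ + 1/2⌋, 0, 1) - δ·g) d(μ ⊗ γ)(z, g) = 0, for every δ and every T, L. -/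

import Mathlib

/-!
Write `f_n` for the clip-floor-shift activation with step `n` on `[0, θ]`. Away from the
countably many jump points, `⌊(θ - z) n / θ + 1/2⌋ = n - ⌊z n / θ + 1/2⌋`, and clipping to
`[0, 1]` commutes with `x ↦ 1 - x`; hence `f_n z + f_n (θ - z) = θ` almost everywhere.
Averaging this identity over the reflection-invariant uniform measure on `[0, θ]` gives mean
`θ / 2`, independently of `n`, so the two activations cancel in expectation, while the
Gaussian noise has mean zero.
-/

open MeasureTheory ProbabilityTheory Set

noncomputable def clipFloorShift (θ : ℝ) (n : ℕ) (z : ℝ) : ℝ :=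
  θ * min 1 (max 0 ((1 / (n : ℝ)) * ((⌊z * n / θ + 1 / 2⌋ : ℤ) : ℝ)))

lemma min_one_max_zero_one_sub (x : ℝ) :
    min 1 (max 0 (1 - x)) = 1 - min 1 (max 0 x) := by
  simp only [min_def, max_def]
  split_ifs <;> linarith

lemma Int.floor_intCast_sub_of_notMem {R : Type*} [Ring R] [LinearOrder R]
    [IsStrictOrderedRing R] [FloorRing R] (m : ℤ) {y : R} (hy : y ∉ Set.range ((↑) : ℤ → R)) :
    ⌊(m : R) - y⌋ = m - ⌊y⌋ - 1 := by
  rw [sub_eq_add_neg, Int.floor_intCast_add, Int.floor_neg,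
    (Int.ceil_eq_floor_add_one_iff_notMem y).2 hy]
  ring

lemma intervalIntegral_eq_of_ae_add_comp_sub_eq {f : ℝ → ℝ} {a b c : ℝ}
    (hf : IntervalIntegrable f volume a b) (h : ∀ᵐ z, f z + f (a + b - z) = c) :
    ∫ z in a..b, f z = (b - a) * c / 2 := by
  have hreflect : ∫ z in a..b, f (a + b - z) = ∫ z in a..b, f z := by
    simp [intervalIntegral.integral_comp_sub_left f (a + b)]
  have hf' : IntervalIntegrable (fun z ↦ f (a + b - z)) volume a b := by
    simpa using (hf.comp_sub_left (a + b)).symm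
  have hsum : ∫ z in a..b, (f z + f (a + b - z)) = (b - a) * c := by
    rw [intervalIntegral.integral_congr_ae (h.mono fun z hz _ ↦ hz)]
    simp
  rw [intervalIntegral.integral_add hf hf', hreflect] at hsum
  linarith

lemma isProbabilityMeasure_uniform_Icc {θ : ℝ} (hθ : 0 < θ) :
    IsProbabilityMeasure ((ENNReal.ofReal θ)⁻¹ • volume.restrict (Icc 0 θ)) :=
  ⟨by simp [Real.volume_Icc, ENNReal.inv_mul_cancel, hθ]⟩

lemma measurable_clipFloorShift (θ : ℝ) (n : ℕ) : Measurable (clipFloorShift θ n) := by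
  unfold clipFloorShift
  fun_prop

lemma integrable_clipFloorShift (θ : ℝ) (n : ℕ) (μ : Measure ℝ) [IsFiniteMeasure μ] :
    Integrable (clipFloorShift θ n) μ := by
  refine .of_bound (measurable_clipFloorShift θ n).aestronglyMeasurable ‖θ‖
    (.of_forall fun z ↦ ?_)
  have hclip (x : ℝ) : ‖min 1 (max 0 x)‖ ≤ 1 := by
    rw [Real.norm_eq_abs, abs_le]
    exact ⟨by linarith [le_min zero_le_one (le_max_left 0 x)], min_le_left _ _⟩
  rw [clipFloorShift, norm_mul]
  exact mul_le_of_le_one_right (norm_nonneg θ) (hclip _)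

section clipFloorShift

variable {θ : ℝ} {n : ℕ}

lemma clipFloorShift_add_clipFloorShift_sub (hθ : θ ≠ 0) (hn : n ≠ 0) {z : ℝ}
    (hz : z * n / θ + 1 / 2 ∉ range ((↑) : ℤ → ℝ)) :
    clipFloorShift θ n z + clipFloorShift θ n (θ - z) = θ := by
  set k : ℤ := ⌊z * n / θ + 1 / 2⌋
  have hfloor : ⌊(θ - z) * n / θ + 1 / 2⌋ = n - k := by
    have h : (θ - z) * n / θ + 1 / 2 = ((n + 1 : ℤ) : ℝ) - (z * n / θ + 1 / 2) := by
      push_cast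
      field_simp
      ring
    rw [h, Int.floor_intCast_sub_of_notMem _ hz]
    ring
  have hscale : 1 / (n : ℝ) * ((n : ℝ) - k) = 1 - 1 / (n : ℝ) * k := by
    field_simp
  rw [clipFloorShift, clipFloorShift, hfloor, Int.cast_sub, Int.cast_natCast, hscale,
    min_one_max_zero_one_sub]
  ring

lemma ae_clipFloorShift_add_clipFloorShift_sub (hθ : θ ≠ 0) (hn : n ≠ 0) :
    ∀ᵐ z, clipFloorShift θ n z + clipFloorShift θ n (θ - z) = θ := by
  have hinj : Function.Injective fun z : ℝ ↦ z * n / θ + 1 / 2 := by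
    intro x y hxy
    simpa [div_left_inj' hθ, hn] using hxy
  filter_upwards [((countable_range ((↑) : ℤ → ℝ)).preimage hinj).ae_notMem volume] with z hz
  exact clipFloorShift_add_clipFloorShift_sub hθ hn hz

lemma integral_clipFloorShift_uniform (hθ : 0 < θ) (hn : n ≠ 0) :
    ∫ z, clipFloorShift θ n z ∂((ENNReal.ofReal θ)⁻¹ • volume.restrict (Icc 0 θ)) = θ / 2 := by
  have hsymm : ∀ᵐ z, clipFloorShift θ n z + clipFloorShift θ n (0 + θ - z) = θ := by
    simpa using ae_clipFloorShift_add_clipFloorShift_sub hθ.ne' hn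
  rw [integral_smul_measure, integral_Icc_eq_integral_Ioc,
    ← intervalIntegral.integral_of_le hθ.le, intervalIntegral_eq_of_ae_add_comp_sub_eq
      ((intervalIntegrable_iff_integrableOn_Ioc_of_le hθ.le).2 (integrable_clipFloorShift θ n _))
      hsymm, ENNReal.toReal_inv, ENNReal.toReal_ofReal hθ.le, smul_eq_mul]
  field_simp
  ring

end clipFloorShift

/-- With `z` uniform on `[0, θ]` and `g` standard Gaussian (independent), the expected
conversion error between the ideal SNN average postsynaptic potential at `T` steps and
the Noisy Quantized activation at step `L` with noise intensity `δ` is zero. -/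
theorem nq_zero_expected_conversion_error (θ : ℝ) (hθ : 0 < θ)
    (T L : ℕ) (hT : 1 ≤ T) (hL : 1 ≤ L) (δ : ℝ) :
    ∫ p : ℝ × ℝ,
        (θ * min 1 (max 0 ((1 / (T : ℝ)) * ((⌊p.1 * T / θ + 1 / 2⌋ : ℤ) : ℝ)))
          - θ * min 1 (max 0 ((1 / (L : ℝ)) * ((⌊p.1 * L / θ + 1 / 2⌋ : ℤ) : ℝ)))
          - δ * p.2)
      ∂(((ENNReal.ofReal θ)⁻¹ • volume.restrict (Set.Icc (0 : ℝ) θ)).prod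
          (gaussianReal 0 1)) = 0 := by
  set μ : Measure ℝ := (ENNReal.ofReal θ)⁻¹ • volume.restrict (Icc 0 θ)
  have := isProbabilityMeasure_uniform_Icc hθ
  set P := μ.prod (gaussianReal 0 1)
  have hact (n : ℕ) : Integrable (fun p : ℝ × ℝ ↦ clipFloorShift θ n p.1) P :=
    (integrable_clipFloorShift θ n μ).comp_fst _
  have hnoise : Integrable (fun p : ℝ × ℝ ↦ δ * p.2) P :=
    (((memLp_id_gaussianReal 1).integrable le_rfl).comp_snd μ).const_mul δ
  show ∫ p, (clipFloorShift θ T p.1 - clipFloorShift θ L p.1 - δ * p.2) ∂P = 0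
  rw [integral_sub (by exact (hact T).sub (hact L)) hnoise, integral_sub (hact T) (hact L),
    integral_fun_fst, integral_fun_fst, integral_const_mul, integral_fun_snd (fun y : ℝ ↦ y),
    integral_clipFloorShift_uniform hθ (by omega), integral_clipFloorShift_uniform hθ (by omega)]
  simp
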